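/- Let n ≥ 1, k ≥ 0, 1 ≤ ℓ ≤ n and 0 ≤ δ ≤ n−ℓ, and let P be a k-Rvalid vector of size n with exactly ℓ nonempty entries. Then the number of elements of succ(P) having exactly ℓ+δ nonempty entries equals δ!·C(n−ℓ, δ)·Σ_{α=δ}^{ℓ} C(ℓ, α)·ℓ^(ℓ−α)·S(α, δ), where S(a,b) denotes the Stirling number of the second kind. -/

import Mathlib

open Finset

/-- `Π·h`: the vector whose `q`-th entry is the union of the `Π p` over all `p` with `h p = q`. -/
def dotAct {n : ℕ} (Pi : Fin n → Finset ℕ) (h : Fin n → Fin n) : Fin n → Finset ℕ :=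
  fun q => (Finset.univ.filter (fun p => h p = q)).biUnion Pi

/-- Entrywise union of two vectors of sets. -/
def vUnion {n : ℕ} (Pi Pi' : Fin n → Finset ℕ) : Fin n → Finset ℕ :=
  fun q => Pi q ∪ Pi' q

/-- `r = max (π₀ ∪ … ∪ π_{n−1})`. -/
def vMax {n : ℕ} (Pi : Fin n → Finset ℕ) : ℕ :=
  (Finset.univ.sup Pi).sup id

/-- `Π↑`: add `r = max (π₀ ∪ … ∪ π_{n−1})` to every element of every entry. -/
def vUp {n : ℕ} (Pi : Fin n → Finset ℕ) : Fin n → Finset ℕ :=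
  fun q => (Pi q).image (· + vMax Pi)

/-- A `k`-EXPcomposition of size `n`: pairwise disjoint entries whose union is `{1,…,2^k}`. -/
def IsEXP {n : ℕ} (k : ℕ) (Pi : Fin n → Finset ℕ) : Prop :=
  (∀ p q : Fin n, p ≠ q → Disjoint (Pi p) (Pi q)) ∧
    Finset.univ.sup Pi = Finset.Icc 1 (2 ^ k)

/-- A `k`-Rvalid vector of size `n`. -/
def IsRvalid {n : ℕ} (k : ℕ) (ρ : Fin n → Finset ℕ) : Prop :=
  IsEXP k ρ ∧ (∀ p : Fin n, p.val = 0 → 1 ∈ ρ p) ∧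
    ∀ k' < k, ∀ i ∈ Finset.Icc 1 (2 ^ k'), ∀ j ∈ Finset.Icc 1 (2 ^ k'),
      (∃ α, i ∈ ρ α ∧ j ∈ ρ α) → ∃ β, i + 2 ^ k' ∈ ρ β ∧ j + 2 ^ k' ∈ ρ β

/-- A `k`-Lvalid vector of size `m`. -/
def IsLvalid {m : ℕ} (k : ℕ) (lam : Fin m → Finset ℕ) : Prop :=
  IsEXP k lam ∧ (∀ p : Fin m, p.val = 0 → 2 ^ k ∈ lam p) ∧
    ∀ k' < k, ∀ i ∈ Finset.Icc 1 (2 ^ k'), ∀ j ∈ Finset.Icc 1 (2 ^ k'),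
      (∃ α, 2 ^ k + 1 - i ∈ lam α ∧ 2 ^ k + 1 - j ∈ lam α) →
        ∃ β, 2 ^ k + 1 - (i + 2 ^ k') ∈ lam β ∧ 2 ^ k + 1 - (j + 2 ^ k') ∈ lam β

/-- Number of nonempty entries of a vector of sets. -/
def nne {n : ℕ} (Pi : Fin n → Finset ℕ) : ℕ :=
  (Finset.univ.filter (fun q => Pi q ≠ ∅)).card

/-- `succ(P) = {P ∪ (P·g)↑ : g}`. -/
def succSet {n : ℕ} (P : Fin n → Finset ℕ) : Finset (Fin n → Finset ℕ) :=
  (Finset.univ : Finset (Fin n → Fin n)).image (fun g => vUnion P (vUp (dotAct P g)))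

/-- The graded set `U_{m,n}^{(k)}` of U-pairs. -/
def Uset (m n : ℕ) : ℕ → Set ((Fin m → Finset ℕ) × (Fin n → Finset ℕ))
  | 0 => {x | x = (fun p => if p.val = 0 then {1} else ∅,
                   fun q => if q.val = 0 then {1} else ∅)}
  | k + 1 => {x | ∃ L P, (L, P) ∈ Uset m n k ∧ ∃ (f : Fin m → Fin m) (g : Fin n → Fin n),
      x = (vUnion (dotAct L f) (vUp L), vUnion P (vUp (dotAct P g)))}

/-- The `r`-Stirling number: partitions of `{1,…,a}` into `b` nonempty blocks
with `1,…,r` in pairwise distinct blocks. -/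
noncomputable def rStirling (a b r : ℕ) : ℕ :=
  Set.ncard {C : Finset (Finset ℕ) |
    C.card = b ∧ (∅ ∉ C) ∧
    (∀ B ∈ C, ∀ B' ∈ C, B ≠ B' → Disjoint B B') ∧
    C.sup id = Finset.Icc 1 a ∧
    ∀ x ∈ Finset.Icc 1 r, ∀ y ∈ Finset.Icc 1 r, x ≠ y →
      ∀ B ∈ C, x ∈ B → y ∉ B}

/-- The Stirling number of the second kind: the number of partitions of an
`a`-element set into `b` nonempty blocks. -/
noncomputable def stirling2 (a b : ℕ) : ℕ := rStirling a b 0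

/-- The entry `s_n^{(i,j)}` (with `1 ≤ i,j ≤ n`). -/
noncomputable def sEntry (n i j : ℕ) : ℕ :=
  if i ≤ j then
    (j - i).factorial * Nat.choose (n - i) (j - i) *
      ∑ α ∈ Finset.Icc (j - i) i, Nat.choose i α * i ^ (i - α) * stirling2 α (j - i)
  else 0

/-- The matrix `S_n`, with rows and columns indexed by `{1,…,n}`. -/
noncomputable def Smat (n : ℕ) : Matrix (Fin n) (Fin n) ℕ :=
  fun i j => sEntry n (i.val + 1) (j.val + 1)

/-- One step of the shuffle-automaton action on subsets of the grid. -/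
def stepE {m n : ℕ} (E : Finset (Fin m × Fin n)) (f : Fin m → Fin m) (g : Fin n → Fin n) :
    Finset (Fin m × Fin n) :=
  E.image (fun p => (f p.1, p.2)) ∪ E.image (fun p => (p.1, g p.2))

/-- Reachability from `{(0,0)}` by finitely many steps. -/
def Reach {m n : ℕ} (hm : 0 < m) (hn : 0 < n) (E : Finset (Fin m × Fin n)) : Prop :=
  Relation.ReflTransGen (fun E1 E2 => ∃ f g, E2 = stepE E1 f g)
    {(⟨0, hm⟩, ⟨0, hn⟩)} E

/-- Reachability from `{(0,0)}` in at most `t` steps. -/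
def ReachIn {m n : ℕ} (hm : 0 < m) (hn : 0 < n) :
    ℕ → Finset (Fin m × Fin n) → Prop
  | 0, E => E = {(⟨0, hm⟩, ⟨0, hn⟩)}
  | t + 1, E => ReachIn hm hn t E ∨
      ∃ E' f g, ReachIn hm hn t E' ∧ E = stepE E' f g

/-- `s(Λ,P) = {(i,j) : λ_i ∩ ρ_j ≠ ∅}`. -/
def sTab {m n : ℕ} (L : Fin m → Finset ℕ) (P : Fin n → Finset ℕ) :
    Finset (Fin m × Fin n) :=
  Finset.univ.filter (fun p => (L p.1 ∩ P p.2).Nonempty)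

/-!
Let `N` be the set of indices of the nonempty entries of `P`. All elements of `P` lie in
`{1, …, r}` with `r = max ⋃ P`, and the entries are disjoint, so for `x ∈ P p` the shifted
element `x + r` lies in entry `q` of `P ∪ (P·g)↑` exactly when `g p = q`. Hence this vector
determines `g` on `N` and nothing more, and its nonempty entries are `N ∪ g(N)`: the count is
the number of maps `h : N → {0, …, n-1}` with `|h(N) \ N| = δ`. Such an `h` is a map from
`A = h⁻¹(Nᶜ)`, say `|A| = α`, onto a `δ`-subset of `Nᶜ` (`C(n-ℓ, δ) · δ! · S(α, δ)` choices,
surjections being counted through ordered set partitions) together with an arbitrary map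
`N \ A → N` (`ℓ^(ℓ-α)` choices).
-/

open Function
open scoped Nat

section SetPartitions

variable {α : Type*} [DecidableEq α]

def orderedPartitions (S : Finset α) (ι : Type*) [Fintype ι] [DecidableEq ι] :
    Finset (ι → Finset α) :=
  {v ∈ Fintype.piFinset fun _ => S.powerset |
    (∀ j, (v j).Nonempty) ∧ (∀ j j', j ≠ j' → Disjoint (v j) (v j')) ∧ univ.sup v = S}

def setPartitions (S : Finset α) (b : ℕ) : Finset (Finset (Finset α)) :=
  {C ∈ S.powerset.powerset | #C = b ∧ ∅ ∉ C ∧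
    (∀ B ∈ C, ∀ B' ∈ C, B ≠ B' → Disjoint B B') ∧ C.sup id = S}

variable {S : Finset α} {ι : Type*} [Fintype ι] [DecidableEq ι]

theorem mem_orderedPartitions {v : ι → Finset α} :
    v ∈ orderedPartitions S ι ↔
      (∀ j, (v j).Nonempty) ∧ Pairwise (Disjoint on v) ∧ univ.sup v = S := by
  simp only [orderedPartitions, mem_filter, Fintype.mem_piFinset, mem_powerset, Pairwise, onFun,
    and_iff_right_iff_imp]
  rintro ⟨-, -, rfl⟩ j
  exact le_sup (mem_univ j)

theorem mem_setPartitions {b : ℕ} {C : Finset (Finset α)} :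
    C ∈ setPartitions S b ↔ #C = b ∧ ∅ ∉ C ∧
      (∀ B ∈ C, ∀ B' ∈ C, B ≠ B' → Disjoint B B') ∧ C.sup id = S := by
  simp only [setPartitions, mem_filter, mem_powerset, and_iff_right_iff_imp]
  rintro ⟨-, -, -, rfl⟩ B hB
  exact mem_powerset.mpr (le_sup (f := id) hB)

theorem stirling2_eq_card_setPartitions (a b : ℕ) :
    stirling2 a b = #(setPartitions (Icc 1 a) b) := by
  rw [stirling2, rStirling, ← Set.ncard_coe_finset]
  congr 1
  ext C
  simp [mem_setPartitions]

theorem injective_of_mem_orderedPartitions {v : ι → Finset α}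
    (hv : v ∈ orderedPartitions S ι) : Injective v := by
  obtain ⟨hne, hdisj, -⟩ := mem_orderedPartitions.mp hv
  intro j j' h
  by_contra hjj'
  have hdisj' : Disjoint (v j) (v j') := hdisj hjj'
  rw [h, disjoint_self] at hdisj'
  exact (hne j').ne_empty hdisj'

theorem image_mem_setPartitions {v : ι → Finset α} (hv : v ∈ orderedPartitions S ι) :
    univ.image v ∈ setPartitions S (Fintype.card ι) := by
  obtain ⟨hne, hdisj, hsup⟩ := mem_orderedPartitions.mp hv
  have hinj := injective_of_mem_orderedPartitions hv
  refine mem_setPartitions.mpr ⟨by rw [card_image_of_injective _ hinj, card_univ], ?_, ?_, ?_⟩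
  · simp only [mem_image, mem_univ, true_and, not_exists]
    exact fun j => (hne j).ne_empty
  · simp only [mem_image, mem_univ, true_and]
    rintro _ ⟨j, rfl⟩ _ ⟨j', rfl⟩ h
    exact hdisj fun hjj' => h (hjj' ▸ rfl)
  · rwa [sup_image, id_comp]

/-- Ordered partitions with a given set of blocks correspond to enumerations `ι ↪ C` of it. -/
theorem card_orderedPartitions_filter_image_eq {C : Finset (Finset α)}
    (hC : C ∈ setPartitions S (Fintype.card ι)) :
    #{v ∈ orderedPartitions S ι | univ.image v = C} = (Fintype.card ι)! := by
  obtain ⟨hcard, hne, hdisj, hsup⟩ := mem_setPartitions.mp hC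
  have hemb : (Fintype.card ι)! = Fintype.card (ι ↪ C) := by
    rw [Fintype.card_embedding_eq, Fintype.card_coe, hcard, Nat.descFactorial_self]
  rw [hemb, ← card_univ]
  refine card_bij' (fun v hv => ⟨fun j => ⟨v j, ?_⟩, fun j j' h => ?_⟩)
    (fun e _ j => e j) (fun _ _ => mem_univ _) (fun e _ => ?_) (fun _ _ => rfl)
    (fun _ _ => rfl)
  · rw [← (mem_filter.mp hv).2]
    exact mem_image_of_mem v (mem_univ j)
  · exact injective_of_mem_orderedPartitions (mem_filter.mp hv).1 (congrArg Subtype.val h)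
  · have hinj : Injective fun j => (e j : Finset α) :=
      fun j j' h => e.injective (Subtype.ext h)
    have himage : univ.image (fun j => (e j : Finset α)) = C := by
      refine eq_of_subset_of_card_le ?_ ?_
      · simp only [subset_iff, mem_image, mem_univ, true_and]
        rintro _ ⟨j, rfl⟩
        exact (e j).2
      · rw [card_image_of_injective _ hinj, card_univ, hcard]
    refine mem_filter.mpr
      ⟨mem_orderedPartitions.mpr ⟨fun j => ?_, fun j j' h => ?_, ?_⟩, himage⟩
    · exact nonempty_iff_ne_empty.mpr fun h => hne (h ▸ (e j).2)
    · exact hdisj _ (e j).2 _ (e j').2 fun h' => h (hinj h')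
    · conv_rhs => rw [← hsup, ← himage, sup_image]
      rfl

theorem card_orderedPartitions :
    #(orderedPartitions S ι) = (Fintype.card ι)! * #(setPartitions S (Fintype.card ι)) := by
  rw [card_eq_sum_card_fiberwise fun v hv => image_mem_setPartitions hv,
    sum_congr rfl fun C hC => card_orderedPartitions_filter_image_eq hC, sum_const, smul_eq_mul,
    mul_comm]

end SetPartitions

section Surjections

variable {α γ : Type*} [DecidableEq γ] {S : Finset α}

def fiberBlocks (f : S → γ) (j : γ) : Finset α :=
  ({a | f a = j} : Finset S).map (Embedding.subtype (· ∈ S))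

theorem mem_fiberBlocks {f : S → γ} {j : γ} {x : α} :
    x ∈ fiberBlocks f j ↔ ∃ hx : x ∈ S, f ⟨x, hx⟩ = j := by
  simp [fiberBlocks]

variable [DecidableEq α] [Fintype γ]

theorem eq_of_mem_of_mem_orderedPartitions {v : γ → Finset α}
    (hv : v ∈ orderedPartitions S γ) {j j' : γ} {x : α} (hj : x ∈ v j) (hj' : x ∈ v j') :
    j = j' := by
  by_contra h
  exact disjoint_left.mp ((mem_orderedPartitions.mp hv).2.1 h) hj hj'

theorem mem_of_mem_orderedPartitions {v : γ → Finset α} (hv : v ∈ orderedPartitions S γ)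
    {j : γ} {x : α} (hx : x ∈ v j) : x ∈ S := by
  rw [← (mem_orderedPartitions.mp hv).2.2]
  exact le_sup (f := v) (mem_univ j) hx

theorem fiberBlocks_mem_orderedPartitions {f : S → γ} (hf : Surjective f) :
    fiberBlocks f ∈ orderedPartitions S γ := by
  refine mem_orderedPartitions.mpr ⟨fun j => ?_, fun j j' h => ?_, ?_⟩
  · obtain ⟨a, rfl⟩ := hf j
    exact ⟨a, mem_fiberBlocks.mpr ⟨a.2, rfl⟩⟩
  · refine disjoint_left.mpr fun x hj hj' => h ?_
    obtain ⟨hx, rfl⟩ := mem_fiberBlocks.mp hj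
    obtain ⟨-, rfl⟩ := mem_fiberBlocks.mp hj'
    rfl
  · ext x
    simp only [mem_sup, mem_univ, true_and, mem_fiberBlocks]
    exact ⟨fun ⟨_, hx, _⟩ => hx, fun hx => ⟨_, hx, rfl⟩⟩

theorem card_surjective_eq_card_orderedPartitions :
    #{f : S → γ | Surjective f} = #(orderedPartitions S γ) := by
  refine card_bij (fun f _ => fiberBlocks f)
    (fun f hf => fiberBlocks_mem_orderedPartitions (mem_filter.mp hf).2) ?_ ?_
  · intro f _ f' _ h
    funext a
    have ha : a.1 ∈ fiberBlocks f' (f a) := h ▸ mem_fiberBlocks.mpr ⟨a.2, rfl⟩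
    exact (mem_fiberBlocks.mp ha).2.symm
  · intro v hv
    have hcover : ∀ a : S, ∃ j, a.1 ∈ v j := fun a => by
      have ha : a.1 ∈ univ.sup v := by rw [(mem_orderedPartitions.mp hv).2.2]; exact a.2
      simpa [mem_sup] using ha
    choose F hF using hcover
    have hF_eq : ∀ {a : S} {j : γ}, a.1 ∈ v j → F a = j :=
      fun ha => eq_of_mem_of_mem_orderedPartitions hv (hF _) ha
    refine ⟨F, mem_filter.mpr ⟨mem_univ _, fun j => ?_⟩, ?_⟩
    · obtain ⟨x, hx⟩ := (mem_orderedPartitions.mp hv).1 j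
      exact ⟨⟨x, mem_of_mem_orderedPartitions hv hx⟩, hF_eq hx⟩
    · ext j x
      rw [mem_fiberBlocks]
      exact ⟨fun ⟨_, hx⟩ => hx ▸ hF _,
        fun hx => ⟨mem_of_mem_orderedPartitions hv hx, hF_eq hx⟩⟩

theorem card_surjective (ι : Type*) [Fintype ι] [DecidableEq ι] :
    #{f : ι → γ | Surjective f} =
      (Fintype.card γ)! * stirling2 (Fintype.card ι) (Fintype.card γ) := by
  let e : ι ≃ Icc 1 (Fintype.card ι) := Fintype.equivOfCardEq (by simp)
  rw [card_equiv (e.arrowCongr (Equiv.refl γ)) fun f => ?_,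
    card_surjective_eq_card_orderedPartitions, card_orderedPartitions,
    stirling2_eq_card_setPartitions]
  simp only [mem_filter, mem_univ, true_and]
  exact (e.symm.surjective_comp f).symm

end Surjections

section Counting

variable {ι γ : Type*} [Fintype ι] [DecidableEq ι] [Fintype γ] [DecidableEq γ]

theorem stirling2_eq_zero_of_lt {a b : ℕ} (h : a < b) : stirling2 a b = 0 := by
  have hsurj := card_surjective (γ := Fin b) (Fin a)
  rw [Fintype.card_fin, Fintype.card_fin, card_eq_zero.mpr ?_] at hsurj
  · exact (Nat.mul_eq_zero.mp hsurj.symm).resolve_left (Nat.factorial_ne_zero b)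
  · refine filter_eq_empty_iff.mpr fun f _ hf => ?_
    have := Fintype.card_le_of_surjective f hf
    simp only [Fintype.card_fin] at this
    omega

theorem card_filter_image_eq (D : Finset γ) :
    #{u : ι → γ | univ.image u = D} = (#D)! * stirling2 (Fintype.card ι) #D := by
  rw [← Fintype.card_coe D, ← card_surjective ι]
  refine card_bij' (fun u hu i => ⟨u i, ?_⟩) (fun f _ i => f i) (fun u hu => ?_)
    (fun f hf => ?_) (fun _ _ => rfl) (fun _ _ => rfl)
  · rw [← (mem_filter.mp hu).2]
    exact mem_image_of_mem u (mem_univ i)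
  · refine mem_filter.mpr ⟨mem_univ _, fun d => ?_⟩
    have hd : d.1 ∈ univ.image u := by rw [(mem_filter.mp hu).2]; exact d.2
    obtain ⟨i, -, hi⟩ := mem_image.mp hd
    exact ⟨i, Subtype.ext hi⟩
  · refine mem_filter.mpr ⟨mem_univ _, ?_⟩
    ext x
    simp only [mem_image, mem_univ, true_and]
    refine ⟨fun ⟨i, hi⟩ => hi ▸ (f i).2, fun hx => ?_⟩
    obtain ⟨i, hi⟩ := (mem_filter.mp hf).2 ⟨x, hx⟩
    exact ⟨i, congrArg Subtype.val hi⟩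

theorem card_filter_card_image (T : Finset γ) (d : ℕ) :
    #{u : ι → γ | (∀ i, u i ∈ T) ∧ #(univ.image u) = d} =
      (#T).choose d * (d ! * stirling2 (Fintype.card ι) d) := by
  have hmaps : ∀ u ∈ ({u | (∀ i, u i ∈ T) ∧ #(univ.image u) = d} : Finset (ι → γ)),
      univ.image u ∈ T.powersetCard d := by
    intro u hu
    obtain ⟨hT, hd⟩ := (mem_filter.mp hu).2
    refine mem_powersetCard.mpr ⟨fun x hx => ?_, hd⟩
    obtain ⟨i, -, rfl⟩ := mem_image.mp hx
    exact hT i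
  rw [card_eq_sum_card_fiberwise hmaps, ← smul_eq_mul, ← card_powersetCard, ← sum_const]
  refine sum_congr rfl fun D hD => ?_
  obtain ⟨hDT, hDd⟩ := mem_powersetCard.mp hD
  rw [filter_filter, ← hDd, ← card_filter_image_eq]
  congr 1
  refine filter_congr fun u _ =>
    ⟨And.right, fun hu => ⟨⟨fun i => hDT ?_, hu ▸ rfl⟩, hu⟩⟩
  exact hu ▸ mem_image_of_mem u (mem_univ i)

/-- A map `h` with `{i | h i ∉ N} = A` is a pair of maps `A → Nᶜ` and `Aᶜ → N`. -/
theorem card_filter_card_image_sdiff_and_eq (N : Finset γ) (A : Finset ι) (δ : ℕ) :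
    #{h : ι → γ | #(univ.image h \ N) = δ ∧ ({i | h i ∉ N} : Finset ι) = A} =
      #{u : A → γ | (∀ i, u i ∈ Nᶜ) ∧ #(univ.image u) = δ} *
        #N ^ (Fintype.card ι - #A) := by
  have hpow : #N ^ (Fintype.card ι - #A) = #(Fintype.piFinset fun _ : {i // i ∉ A} => N) := by
    rw [Fintype.card_piFinset, prod_const, card_univ, Fintype.card_subtype_compl,
      Fintype.card_coe]
  rw [hpow, ← card_product]
  refine card_equiv (Equiv.piEquivPiSubtypeProd (· ∈ A) fun _ => γ) fun h => ?_
  simp only [mem_filter, mem_product, Fintype.mem_piFinset, mem_univ, true_and, mem_compl,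
    Equiv.piEquivPiSubtypeProd_apply]
  have hsplit : ({i | h i ∉ N} : Finset ι) = A ↔
      (∀ i : A, h i ∉ N) ∧ ∀ i : {i // i ∉ A}, h i ∈ N := by
    simp only [Finset.ext_iff, mem_filter, mem_univ, true_and, Subtype.forall]
    exact ⟨fun hA => ⟨fun i hi => (hA i).mpr hi,
        fun i hi => not_not.mp fun h' => hi ((hA i).mp h')⟩,
      fun ⟨hA, hAc⟩ i => ⟨fun h' => not_not.mp fun hi => h' (hAc i hi), hA i⟩⟩
  have himage : (∀ i : A, h i ∉ N) → (∀ i : {i // i ∉ A}, h i ∈ N) →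
      univ.image h \ N = univ.image fun i : A => h i := by
    intro hA hAc
    ext y
    simp only [mem_sdiff, mem_image, mem_univ, true_and, Subtype.exists]
    constructor
    · rintro ⟨⟨i, rfl⟩, hy⟩
      exact ⟨i, not_not.mp fun hi => hy (hAc ⟨i, hi⟩), rfl⟩
    · rintro ⟨i, hi, rfl⟩
      exact ⟨⟨i, rfl⟩, hA ⟨i, hi⟩⟩
  rw [hsplit]
  constructor
  · rintro ⟨hδ, hA, hAc⟩
    exact ⟨⟨hA, himage hA hAc ▸ hδ⟩, hAc⟩
  · rintro ⟨⟨hA, hδ⟩, hAc⟩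
    exact ⟨himage hA hAc ▸ hδ, hA, hAc⟩

theorem card_filter_card_image_sdiff (N : Finset γ) (δ : ℕ) :
    #{h : ι → γ | #(univ.image h \ N) = δ} =
      δ ! * (Fintype.card γ - #N).choose δ *
        ∑ α ∈ Icc δ (Fintype.card ι),
          (Fintype.card ι).choose α * #N ^ (Fintype.card ι - α) * stirling2 α δ := by
  rw [card_eq_sum_card_fiberwise (f := fun h => ({i | h i ∉ N} : Finset ι)) (t := univ)
    fun _ _ => mem_univ _]
  simp_rw [filter_filter, card_filter_card_image_sdiff_and_eq, card_filter_card_image, card_compl,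
    Fintype.card_coe]
  rw [← powerset_univ, sum_powerset_apply_card
    fun α => (Fintype.card γ - #N).choose δ * (δ ! * stirling2 α δ) *
      #N ^ (Fintype.card ι - α),
    card_univ, mul_sum]
  symm
  refine sum_subset (fun α hα => ?_) (fun α _ hα => ?_) |>.trans (sum_congr rfl fun α _ => ?_)
  · simp only [mem_Icc, mem_range] at hα ⊢
    omega
  · rw [stirling2_eq_zero_of_lt (by simp_all)]
    simp
  · rw [smul_eq_mul]
    ring

end Counting

section Successors

variable {n : ℕ} (P : Fin n → Finset ℕ)

def succMap (g : Fin n → Fin n) : Fin n → Finset ℕ :=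
  vUnion P (vUp (dotAct P g))

def entrySupport : Finset (Fin n) :=
  {q | P q ≠ ∅}

variable {P}

theorem nne_eq_card_entrySupport : nne P = #(entrySupport P) := rfl

theorem mem_entrySupport {p : Fin n} : p ∈ entrySupport P ↔ (P p).Nonempty := by
  simp [entrySupport, nonempty_iff_ne_empty]

theorem mem_dotAct {g : Fin n → Fin n} {q : Fin n} {x : ℕ} :
    x ∈ dotAct P g q ↔ ∃ p, g p = q ∧ x ∈ P p := by
  simp [dotAct]

theorem vMax_dotAct (g : Fin n → Fin n) : vMax (dotAct P g) = vMax P := by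
  have hsup : univ.sup (dotAct P g) = univ.sup P := by
    ext x
    simp only [mem_sup, mem_univ, true_and, mem_dotAct]
    exact ⟨fun ⟨_, p, _, hx⟩ => ⟨p, hx⟩, fun ⟨p, hx⟩ => ⟨g p, p, rfl, hx⟩⟩
  rw [vMax, vMax, hsup]

theorem le_vMax {p : Fin n} {x : ℕ} (hx : x ∈ P p) : x ≤ vMax P :=
  le_sup (f := id) (le_sup (f := P) (mem_univ p) hx)

theorem succMap_nonempty_iff {g : Fin n → Fin n} {q : Fin n} :
    (succMap P g q).Nonempty ↔ q ∈ entrySupport P ∪ (entrySupport P).image g := by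
  simp only [succMap, vUnion, vUp, union_nonempty, image_nonempty, mem_union, mem_image,
    mem_entrySupport]
  refine or_congr_right ⟨fun ⟨x, hx⟩ => ?_,
    fun ⟨p, ⟨x, hx⟩, hp⟩ => ⟨x, mem_dotAct.mpr ⟨p, hp, hx⟩⟩⟩
  obtain ⟨p, hp, hx⟩ := mem_dotAct.mp hx
  exact ⟨p, ⟨x, hx⟩, hp⟩

theorem nne_succMap (g : Fin n → Fin n) :
    nne (succMap P g) = #(entrySupport P ∪ (entrySupport P).image g) := by
  rw [nne]
  congr 1
  ext q
  simp only [mem_filter, mem_univ, true_and, ← nonempty_iff_ne_empty, succMap_nonempty_iff]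

section DisjointEntries

variable (hdisj : Pairwise (Disjoint on P)) (h0 : ∀ p, 0 ∉ P p)
include hdisj h0

theorem add_vMax_mem_succMap_iff {g : Fin n → Fin n} {p q : Fin n} {x : ℕ} (hx : x ∈ P p) :
    x + vMax P ∈ succMap P g q ↔ g p = q := by
  simp only [succMap, vUnion, vUp, vMax_dotAct, mem_union, mem_image, add_left_inj,
    exists_eq_right, mem_dotAct]
  constructor
  · rintro (h | ⟨p', rfl, hx'⟩)
    · have hpos : x ≠ 0 := fun h' => h0 p (h' ▸ hx)
      have := le_vMax h
      omega
    · obtain rfl : p' = p := by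
        by_contra hne
        exact disjoint_left.mp (hdisj hne) hx' hx
      rfl
  · rintro rfl
    exact Or.inr ⟨p, rfl, hx⟩

theorem succMap_eq_succMap_iff {g g' : Fin n → Fin n} :
    succMap P g = succMap P g' ↔ ∀ p ∈ entrySupport P, g p = g' p := by
  refine ⟨fun h p hp => ?_, fun h => ?_⟩
  · obtain ⟨x, hx⟩ := mem_entrySupport.mp hp
    rw [← add_vMax_mem_succMap_iff hdisj h0 hx, h, add_vMax_mem_succMap_iff hdisj h0 hx]
  · have hdot : dotAct P g = dotAct P g' := by
      ext q x
      simp only [mem_dotAct]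
      refine exists_congr fun p =>
        ⟨fun ⟨hp, hx⟩ => ⟨?_, hx⟩, fun ⟨hp, hx⟩ => ⟨?_, hx⟩⟩
      · rw [← h p (mem_entrySupport.mpr ⟨x, hx⟩), hp]
      · rw [h p (mem_entrySupport.mpr ⟨x, hx⟩), hp]
    rw [succMap, succMap, hdot]

theorem card_filter_succSet (δ : ℕ) :
    #((succSet P).filter fun Q => nne Q = nne P + δ) =
      #{h : entrySupport P → Fin n | #(univ.image h \ entrySupport P) = δ} := by
  let ext : (entrySupport P → Fin n) → Fin n → Fin n := fun h => extend Subtype.val h id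
  have hext : ∀ h (p : entrySupport P), ext h p = h p :=
    fun h p => Subtype.val_injective.extend_apply h id p
  have hsucc : succSet P = univ.image (succMap P ∘ ext) := by
    ext Q
    simp only [succSet, mem_image, mem_univ, true_and, comp_apply]
    constructor
    · rintro ⟨g, rfl⟩
      exact ⟨fun p => g p, (succMap_eq_succMap_iff hdisj h0).mpr fun p hp => hext _ ⟨p, hp⟩⟩
    · rintro ⟨h, rfl⟩
      exact ⟨ext h, rfl⟩
  have hinj : Injective (succMap P ∘ ext) := fun h h' e => funext fun p => by
    simpa only [hext] using (succMap_eq_succMap_iff hdisj h0).mp e p p.2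
  rw [hsucc, filter_image, card_image_of_injective _ hinj]
  refine congrArg card (filter_congr fun h _ => ?_)
  have himage : (entrySupport P).image (ext h) = univ.image h := by
    ext y
    simp only [mem_image, mem_univ, true_and]
    exact ⟨fun ⟨p, hp, e⟩ => ⟨⟨p, hp⟩, hext h ⟨p, hp⟩ ▸ e⟩,
      fun ⟨p, e⟩ => ⟨p, p.2, hext h p ▸ e⟩⟩
  rw [comp_apply, nne_succMap, himage, union_comm, ← card_sdiff_add_card,
    nne_eq_card_entrySupport]
  omega

end DisjointEntries

end Successors

theorem IsEXP.pairwise_disjoint {n k : ℕ} {P : Fin n → Finset ℕ} (hP : IsEXP k P) :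
    Pairwise (Disjoint on P) :=
  fun p q => hP.1 p q

theorem IsEXP.zero_notMem {n k : ℕ} {P : Fin n → Finset ℕ} (hP : IsEXP k P) (p : Fin n) :
    0 ∉ P p := by
  intro h
  have h' : 0 ∈ univ.sup P := le_sup (f := P) (mem_univ p) h
  simp [hP.2] at h'

theorem stmt7_general (n k ℓ δ : ℕ) (P : Fin n → Finset ℕ) (hP : IsRvalid k P) (hc : nne P = ℓ) :
    ((succSet P).filter (fun Q => nne Q = ℓ + δ)).card =
      δ.factorial * Nat.choose (n - ℓ) δ *
        ∑ α ∈ Finset.Icc δ ℓ, Nat.choose ℓ α * ℓ ^ (ℓ - α) * stirling2 α δ := by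
  subst hc
  rw [card_filter_succSet hP.1.pairwise_disjoint hP.1.zero_notMem, card_filter_card_image_sdiff,
    Fintype.card_coe, Fintype.card_fin, nne_eq_card_entrySupport]

theorem stmt7 (n k ℓ δ : ℕ) (hn : 1 ≤ n) (hℓ1 : 1 ≤ ℓ) (hℓn : ℓ ≤ n)
    (hδ : δ ≤ n - ℓ) (P : Fin n → Finset ℕ) (hP : IsRvalid k P) (hc : nne P = ℓ) :
    ((succSet P).filter (fun Q => nne Q = ℓ + δ)).card =
      δ.factorial * Nat.choose (n - ℓ) δ *
        ∑ α ∈ Finset.Icc δ ℓ, Nat.choose ℓ α * ℓ ^ (ℓ - α) * stirling2 α δ :=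
  stmt7_general n k ℓ δ P hP hc
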